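/- arXiv:1701.06589 — 7 statements merged into one kernel-verified Lean document; each statement's English description precedes it below -/
import Mathlib

section
/- Let C = {(x,s) ∈ ℤ^m × ℝ^k : x = f + Σ_{j=1}^k r^j s_j, s ≥ 0}, and let Π = (π^1 x ≥ π^1_0) ∨ ... ∨ (π^p x ≥ π^p_0) be a disjunction satisfied by all points of ℤ^m and not satisfied by f. Then the inequality Σ_{j=1}^k max_{l=1,...,p} { (π^l · r^j) / (π^l_0 − π^l · f) } s_j ≥ 1 is valid for C, i.e., every point of C satisfies it. -/
/-- Intersection cut from a `p`-term disjunction and `m` rows (Proposition A.1). -/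
theorem stmt_0 (m k p : ℕ)
    (f : Fin m → ℝ) (r : Fin k → Fin m → ℝ)
    (π : Fin (p + 1) → Fin m → ℝ) (π₀ : Fin (p + 1) → ℝ)
    (hPi : ∀ x : Fin m → ℤ, ∃ l, π₀ l ≤ ∑ i, π l i * (x i : ℝ))
    (hf : ∀ l, ∑ i, π l i * f i < π₀ l)
    (x : Fin m → ℤ) (s : Fin k → ℝ)
    (hs : ∀ j, 0 ≤ s j)
    (hx : ∀ i, (x i : ℝ) = f i + ∑ j, r j i * s j) :
    1 ≤ ∑ j, (Finset.univ.sup' Finset.univ_nonempty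
      (fun l => (∑ i, π l i * r j i) / (π₀ l - ∑ i, π l i * f i))) * s j := by
  obtain ⟨l, hl⟩ := hPi x
  set d : ℝ := π₀ l - ∑ i, π l i * f i with hd
  have hdpos : 0 < d := by simpa [hd] using sub_pos.mpr (hf l)
  -- compute π l · x
  have hpx : ∑ i, π l i * (x i : ℝ)
      = (∑ i, π l i * f i) + ∑ j, (∑ i, π l i * r j i) * s j := by
    have : ∑ i, π l i * (x i : ℝ)
        = ∑ i, (π l i * f i + ∑ j, π l i * (r j i * s j)) := by
      refine Finset.sum_congr rfl fun i _ => ?_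
      rw [hx i, mul_add, Finset.mul_sum]
    rw [this, Finset.sum_add_distrib]
    congr 1
    rw [Finset.sum_comm]
    refine Finset.sum_congr rfl fun j _ => ?_
    rw [Finset.sum_mul]
    exact Finset.sum_congr rfl fun i _ => by ring
  have hkey : d ≤ ∑ j, (∑ i, π l i * r j i) * s j := by
    have := hl
    rw [hpx] at this
    linarith
  have hterm : ∀ j, ((∑ i, π l i * r j i) / d) * s j
      ≤ (Finset.univ.sup' Finset.univ_nonempty
        (fun l => (∑ i, π l i * r j i) / (π₀ l - ∑ i, π l i * f i))) * s j := by
    intro j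
    apply mul_le_mul_of_nonneg_right _ (hs j)
    exact Finset.le_sup' (fun l' => (∑ i, π l' i * r j i) / (π₀ l' - ∑ i, π l' i * f i))
      (Finset.mem_univ l)
  calc 1 ≤ (∑ j, (∑ i, π l i * r j i) * s j) / d := (one_le_div hdpos).mpr hkey
    _ = ∑ j, ((∑ i, π l i * r j i) / d) * s j := by
        rw [Finset.sum_div]
        exact Finset.sum_congr rfl fun j _ => by ring
    _ ≤ _ := Finset.sum_le_sum fun j _ => hterm j
end

section
/- Let C = {(x,s) ∈ ℤ^m × ℝ^k : x = f + Σ_j r^j s_j, s ≥ 0}, J = {1,...,k}, I ⊆ J, and C^I = C ∩ {(x,s) : s_j ∈ ℤ for all j ∈ I}. Let Π = (π^1 x ≥ π^1_0) ∨ ... ∨ (π^p x ≥ π^p_0) be a disjunction satisfied by all x ∈ ℤ^m and with π^l f < π^l_0 for all l. Then for any integral vectors m^j ∈ ℤ^m (j ∈ I), the lifted inequality Σ_{j∈I} max_l { π^l(r^j − m^j)/(π^l_0 − π^l f) } s_j + Σ_{j∈J∖I} max_l { π^l r^j/(π^l_0 − π^l f) } s_j ≥ 1 is valid for C^I. -/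
/-- The lifted intersection cut (trivial fill-in) is valid for `C^I` (Proposition B.2). -/
theorem stmt_2 (m k p : ℕ)
    (f : Fin m → ℝ) (r : Fin k → Fin m → ℝ)
    (π : Fin (p + 1) → Fin m → ℝ) (π₀ : Fin (p + 1) → ℝ)
    (I : Finset (Fin k)) (mv : Fin k → Fin m → ℤ)
    (hPi : ∀ x : Fin m → ℤ, ∃ l, π₀ l ≤ ∑ i, π l i * (x i : ℝ))
    (hf : ∀ l, ∑ i, π l i * f i < π₀ l)
    (x : Fin m → ℤ) (s : Fin k → ℝ)
    (hs : ∀ j, 0 ≤ s j)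
    (hsI : ∀ j ∈ I, ∃ z : ℤ, s j = (z : ℝ))
    (hx : ∀ i, (x i : ℝ) = f i + ∑ j, r j i * s j) :
    1 ≤ ∑ j ∈ I, (Finset.univ.sup' Finset.univ_nonempty
          (fun l => (∑ i, π l i * (r j i - (mv j i : ℝ))) / (π₀ l - ∑ i, π l i * f i))) * s j
      + ∑ j ∈ Iᶜ, (Finset.univ.sup' Finset.univ_nonempty
          (fun l => (∑ i, π l i * r j i) / (π₀ l - ∑ i, π l i * f i))) * s j := by
  classical
  set zf : Fin k → ℤ := fun j => if h : j ∈ I then Classical.choose (hsI j h) else 0 with hzfdef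
  have hzf : ∀ j ∈ I, s j = (zf j : ℝ) := by
    intro j hj
    simp only [hzfdef, dif_pos hj]
    exact Classical.choose_spec (hsI j hj)
  set x' : Fin m → ℤ := fun i => x i - ∑ j ∈ I, mv j i * zf j with hx'def
  have key : ∀ i, (x' i : ℝ)
      = f i + (∑ j ∈ I, (r j i - (mv j i : ℝ)) * s j + ∑ j ∈ Iᶜ, r j i * s j) := by
    intro i
    have hsplit : ∑ j, r j i * s j = ∑ j ∈ I, r j i * s j + ∑ j ∈ Iᶜ, r j i * s j :=
      (Finset.sum_add_sum_compl I _).symm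
    have h2 : ∑ j ∈ I, ((mv j i : ℝ) * (zf j : ℝ)) = ∑ j ∈ I, (mv j i : ℝ) * s j :=
      Finset.sum_congr rfl fun j hj => by rw [hzf j hj]
    have : (x' i : ℝ) = (x i : ℝ) - ∑ j ∈ I, ((mv j i : ℝ) * (zf j : ℝ)) := by
      simp [hx'def]
    rw [this, h2, hx i, hsplit]
    simp [sub_mul, Finset.sum_sub_distrib]
    ring
  obtain ⟨l, hl⟩ := hPi x'
  have hD : 0 < π₀ l - ∑ i, π l i * f i := by linarith [hf l]
  have hswap : ∑ i, π l i * (x' i : ℝ)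
      = ∑ i, π l i * f i
        + (∑ j ∈ I, (∑ i, π l i * (r j i - (mv j i : ℝ))) * s j
          + ∑ j ∈ Iᶜ, (∑ i, π l i * r j i) * s j) := by
    simp only [key, mul_add, Finset.sum_add_distrib, Finset.mul_sum]
    congr 1
    congr 1
    · rw [Finset.sum_comm]
      exact Finset.sum_congr rfl fun j _ => by
        rw [Finset.sum_mul]; exact Finset.sum_congr rfl fun i _ => by ring
    · rw [Finset.sum_comm]
      exact Finset.sum_congr rfl fun j _ => by
        rw [Finset.sum_mul]; exact Finset.sum_congr rfl fun i _ => by ring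
  have hAB : π₀ l - ∑ i, π l i * f i
      ≤ ∑ j ∈ I, (∑ i, π l i * (r j i - (mv j i : ℝ))) * s j
        + ∑ j ∈ Iᶜ, (∑ i, π l i * r j i) * s j := by
    rw [hswap] at hl; linarith
  have h1 : (1 : ℝ) ≤ ∑ j ∈ I, ((∑ i, π l i * (r j i - (mv j i : ℝ)))
        / (π₀ l - ∑ i, π l i * f i)) * s j
      + ∑ j ∈ Iᶜ, ((∑ i, π l i * r j i) / (π₀ l - ∑ i, π l i * f i)) * s j := by
    have e : ∑ j ∈ I, ((∑ i, π l i * (r j i - (mv j i : ℝ)))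
          / (π₀ l - ∑ i, π l i * f i)) * s j
        + ∑ j ∈ Iᶜ, ((∑ i, π l i * r j i) / (π₀ l - ∑ i, π l i * f i)) * s j
        = (∑ j ∈ I, (∑ i, π l i * (r j i - (mv j i : ℝ))) * s j
            + ∑ j ∈ Iᶜ, (∑ i, π l i * r j i) * s j) / (π₀ l - ∑ i, π l i * f i) := by
      simp only [div_mul_eq_mul_div, ← Finset.sum_div, ← add_div]
    rw [e, ← div_self hD.ne']
    exact (div_le_div_iff_of_pos_right hD).mpr hAB
  refine le_trans h1 ?_
  gcongr with j hj j hj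
  · exact hs _
  · exact Finset.le_sup' (fun l => (∑ i, π l i * (r j i - (mv j i : ℝ)))
      / (π₀ l - ∑ i, π l i * f i)) (Finset.mem_univ l)
  · exact hs _
  · exact Finset.le_sup' (fun l => (∑ i, π l i * r j i)
      / (π₀ l - ∑ i, π l i * f i)) (Finset.mem_univ l)
end

section
/- Let 0 < η ≤ μ, let f = (f_i, f_ℓ) with denominators 1 − f_ℓ − η f_i > 0, f_ℓ − μ f_i > 0 and 1 − (μ+η) f_i > 0, and fix a ray r = (r_i, r_ℓ) ∈ ℝ^2. Define Ψ(m_1, m_2) = max{ (η(r_i + m_1) + r_ℓ − m_2)/(1 − f_ℓ − η f_i), (μ(r_i + m_1) + m_2 − r_ℓ)/(f_ℓ − μ f_i) } for m_1 ∈ ℤ_+, m_2 ∈ ℤ. Then min over (m_1, m_2) ∈ ℤ_+ × ℤ of Ψ(m_1, m_2) equals min{ (η r_i + r_ℓ − ⌊m̄_2⌋)/(1 − f_ℓ − η f_i), (μ r_i + ⌈m̄_2⌉ − r_ℓ)/(f_ℓ − μ f_i) }, where m̄_2 = r_ℓ + r_i(−μ + (μ+η) f_ℓ)/(1 − (μ+η)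 f_i). -/
/-- Closed form for the integer lifting coefficient in the wedge cut (Proposition 4). -/
theorem stmt_5 (η μ fi fl ri rl : ℝ) (hη : 0 < η) (hημ : η ≤ μ)
    (hD1 : 0 < 1 - fl - η * fi) (hD2 : 0 < fl - μ * fi)
    (hD3 : 0 < 1 - (μ + η) * fi) :
    let m2bar : ℝ := rl + ri * (-μ + (μ + η) * fl) / (1 - (μ + η) * fi)
    let Ψ : ℤ → ℤ → ℝ := fun m1 m2 =>
      max ((η * (ri + (m1 : ℝ)) + rl - (m2 : ℝ)) / (1 - fl - η * fi))
          ((μ * (ri + (m1 : ℝ)) + (m2 : ℝ) - rl) / (fl - μ * fi))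
    IsLeast {v : ℝ | ∃ m1 m2 : ℤ, 0 ≤ m1 ∧ v = Ψ m1 m2}
      (min ((η * ri + rl - (⌊m2bar⌋ : ℝ)) / (1 - fl - η * fi))
           ((μ * ri + (⌈m2bar⌉ : ℝ) - rl) / (fl - μ * fi))) := by
  intro m2bar Ψ
  have hμ : 0 < μ := lt_of_lt_of_le hη hημ
  have hEq : (η * ri + rl - m2bar) / (1 - fl - η * fi)
      = (μ * ri + m2bar - rl) / (fl - μ * fi) := by
    rw [div_eq_div_iff hD1.ne' hD2.ne']
    simp only [m2bar]
    field_simp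
    ring
  have hfl : (⌊m2bar⌋ : ℝ) ≤ m2bar := Int.floor_le _
  have hcl : m2bar ≤ (⌈m2bar⌉ : ℝ) := Int.le_ceil _
  -- value of Ψ 0 ⌊m2bar⌋
  have h1 : Ψ 0 ⌊m2bar⌋ = (η * ri + rl - (⌊m2bar⌋ : ℝ)) / (1 - fl - η * fi) := by
    simp only [Ψ, Int.cast_zero, add_zero]
    apply max_eq_left
    calc (μ * ri + (⌊m2bar⌋ : ℝ) - rl) / (fl - μ * fi)
        ≤ (μ * ri + m2bar - rl) / (fl - μ * fi) := by gcongr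
      _ = (η * ri + rl - m2bar) / (1 - fl - η * fi) := hEq.symm
      _ ≤ (η * ri + rl - (⌊m2bar⌋ : ℝ)) / (1 - fl - η * fi) := by gcongr <;> linarith
  have h2 : Ψ 0 ⌈m2bar⌉ = (μ * ri + (⌈m2bar⌉ : ℝ) - rl) / (fl - μ * fi) := by
    simp only [Ψ, Int.cast_zero, add_zero]
    apply max_eq_right
    calc (η * ri + rl - (⌈m2bar⌉ : ℝ)) / (1 - fl - η * fi)
        ≤ (η * ri + rl - m2bar) / (1 - fl - η * fi) := by gcongr <;> linarith
      _ = (μ * ri + m2bar - rl) / (fl - μ * fi) := hEq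
      _ ≤ (μ * ri + (⌈m2bar⌉ : ℝ) - rl) / (fl - μ * fi) := by gcongr
  constructor
  · rcases le_total ((η * ri + rl - (⌊m2bar⌋ : ℝ)) / (1 - fl - η * fi))
        ((μ * ri + (⌈m2bar⌉ : ℝ) - rl) / (fl - μ * fi)) with h | h
    · exact ⟨0, ⌊m2bar⌋, le_refl 0, by rw [min_eq_left h, h1]⟩
    · exact ⟨0, ⌈m2bar⌉, le_refl 0, by rw [min_eq_right h, h2]⟩
  · rintro v ⟨m1, m2, hm1, rfl⟩
    have hm1' : (0:ℝ) ≤ (m1 : ℝ) := by exact_mod_cast hm1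
    rcases le_or_gt (m2 : ℝ) (⌊m2bar⌋ : ℝ) with h | h
    · refine le_trans (min_le_left _ _) ?_
      refine le_trans ?_ (le_max_left _ _)
      gcongr
      nlinarith
    · have hge : (⌈m2bar⌉ : ℝ) ≤ (m2 : ℝ) := by
        have : ⌊m2bar⌋ + 1 ≤ m2 := by exact_mod_cast h
        have := Int.ceil_le_floor_add_one m2bar
        exact_mod_cast le_trans this ‹⌊m2bar⌋ + 1 ≤ m2›
      refine le_trans (min_le_right _ _) ?_
      refine le_trans ?_ (le_max_right _ _)
      gcongr
      nlinarith
end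

section
/- Let T be the triangle in ℝ^2 with vertices p^1, p^2 = (−1, 1+η), p^3 = (−1, −μ), where 0 ≤ η ≤ μ ≤ η+1, and where p^1 is the intersection of the line through p^2 and (0,1) with the line through p^3 and (0,0). Then T contains no integer point in its interior; i.e., T is lattice-free. -/
/-- The canonical Type 1/Type 2 triangle is lattice-free: no integer point lies in
its interior. -/
theorem stmt_8 (η μ : ℝ) (h0 : 0 ≤ η) (hημ : η ≤ μ) (hμ : μ ≤ η + 1) :
    ¬ ∃ x y : ℤ, -1 < (x : ℝ) ∧ η * (x : ℝ) + (y : ℝ) < 1 ∧ μ * (x : ℝ) - (y : ℝ) < 0 := by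
  rintro ⟨x, y, h1, h2, h3⟩
  have hx : (0 : ℝ) ≤ x := by
    have hz : (-1 : ℤ) < x := by exact_mod_cast h1
    exact_mod_cast (by omega : (0:ℤ) ≤ x)
  have hμ0 : 0 ≤ μ := le_trans h0 hημ
  have hy0 : (0 : ℝ) < y := lt_of_le_of_lt (mul_nonneg hμ0 hx) (by linarith)
  have hy1 : (1 : ℝ) ≤ y := by
    have hz : (0 : ℤ) < y := by exact_mod_cast hy0
    exact_mod_cast (by omega : (1:ℤ) ≤ y)
  nlinarith [mul_nonneg h0 hx]
end

section
/- Let f = (f_i, f_ℓ) with −1 < f_i, 0 < η f_i + f_ℓ < 1 and μ f_i < f_ℓ (so f lies in the interior of the canonical triangle), where 0 ≤ η ≤ μ ≤ η+1. Then for every (x, s) ∈ ℤ^2 × ℝ^k_+ with x = f + Σ_{j=1}^k r^j s_j, the inequality Σ_{j=1}^k max{ −r^j_i/(1 + f_i), (η r^j_i + r^j_ℓ)/(1 − η f_i − f_ℓ), (μ r^j_i − r^j_ℓ)/(−μ f_i + f_ℓ) } s_j ≥ 1 holds. -/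
/-- The intersection cut (4) from the canonical Type 1 or Type 2 lattice-free triangle
is valid for the two-row model. -/
theorem stmt_10 (k : ℕ) (η μ fi fl : ℝ) (h0 : 0 ≤ η) (hημ : η ≤ μ) (hμ : μ ≤ η + 1)
    (hfi : -1 < fi) (hf1 : 0 < η * fi + fl) (hf2 : η * fi + fl < 1) (hf3 : μ * fi < fl)
    (r : Fin k → ℝ × ℝ) (x : ℤ × ℤ) (s : Fin k → ℝ) (hs : ∀ j, 0 ≤ s j)
    (hx1 : (x.1 : ℝ) = fi + ∑ j, (r j).1 * s j)
    (hx2 : (x.2 : ℝ) = fl + ∑ j, (r j).2 * s j) :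
    1 ≤ ∑ j, max (-(r j).1 / (1 + fi))
        (max ((η * (r j).1 + (r j).2) / (1 - η * fi - fl))
             ((μ * (r j).1 - (r j).2) / (-μ * fi + fl))) * s j := by
  have hD1 : (0:ℝ) < 1 + fi := by linarith
  have hD2 : (0:ℝ) < 1 - η * fi - fl := by linarith
  have hD3 : (0:ℝ) < -μ * fi + fl := by linarith
  set M : Fin k → ℝ := fun j => max (-(r j).1 / (1 + fi))
        (max ((η * (r j).1 + (r j).2) / (1 - η * fi - fl))
             ((μ * (r j).1 - (r j).2) / (-μ * fi + fl))) with hM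
  have hS1 : ∑ j, (r j).1 * s j = (x.1:ℝ) - fi := by linarith
  have hS2 : ∑ j, (r j).2 * s j = (x.2:ℝ) - fl := by linarith
  -- lattice-freeness case split
  have hfi0 : μ * fi ≤ fl := le_of_lt hf3
  rcases le_or_gt (x.1) (-1) with hc1 | hc1
  · -- x.1 ≤ -1 : use first functional
    have h : ∀ j, -(r j).1 ≤ M j * (1 + fi) := fun j =>
      (div_le_iff₀ hD1).mp (le_max_left _ _)
    have hsum : fi - (x.1:ℝ) ≤ (∑ j, M j * s j) * (1 + fi) := by
      have e1 : fi - (x.1:ℝ) = ∑ j, -(r j).1 * s j := by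
        have : ∑ j, -(r j).1 * s j = -∑ j, (r j).1 * s j := by
          simp [neg_mul]
        rw [this, hS1]; ring
      have e2 : ∑ j, -(r j).1 * s j ≤ ∑ j, M j * s j * (1 + fi) := by
        apply Finset.sum_le_sum
        intro j _
        have := mul_le_mul_of_nonneg_right (h j) (hs j)
        nlinarith [this]
      rw [e1, Finset.sum_mul]
      exact e2
    have hx1R : (x.1:ℝ) ≤ -1 := by exact_mod_cast hc1
    nlinarith [hsum]
  · -- x.1 ≥ 0
    have hx1R : (0:ℝ) ≤ (x.1:ℝ) := by
      have : (0:ℤ) ≤ x.1 := by omega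
      exact_mod_cast this
    rcases le_or_gt (x.2) 0 with hc2 | hc2
    · -- x.2 ≤ 0 : use third functional
      have hx2R : (x.2:ℝ) ≤ 0 := by exact_mod_cast hc2
      have h : ∀ j, μ * (r j).1 - (r j).2 ≤ M j * (-μ * fi + fl) := fun j =>
        (div_le_iff₀ hD3).mp (le_trans (le_max_right _ _) (le_max_right _ _))
      have hsum : μ * ((x.1:ℝ) - fi) - ((x.2:ℝ) - fl)
          ≤ (∑ j, M j * s j) * (-μ * fi + fl) := by
        have e1 : μ * ((x.1:ℝ) - fi) - ((x.2:ℝ) - fl)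
            = ∑ j, (μ * (r j).1 - (r j).2) * s j := by
          have : ∑ j, (μ * (r j).1 - (r j).2) * s j
              = μ * ∑ j, (r j).1 * s j - ∑ j, (r j).2 * s j := by
            rw [Finset.mul_sum, ← Finset.sum_sub_distrib]
            apply Finset.sum_congr rfl
            intro j _; ring
          rw [this, hS1, hS2]
        have e2 : ∑ j, (μ * (r j).1 - (r j).2) * s j ≤ ∑ j, M j * s j * (-μ * fi + fl) := by
          apply Finset.sum_le_sum
          intro j _
          have := mul_le_mul_of_nonneg_right (h j) (hs j)
          nlinarith [this]
        rw [e1, Finset.sum_mul]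
        exact e2
      have hμ0 : 0 ≤ μ := le_trans h0 hημ
      nlinarith [hsum, mul_nonneg hμ0 hx1R]
    · -- x.2 ≥ 1 : use second functional
      have hx2R : (1:ℝ) ≤ (x.2:ℝ) := by
        have : (1:ℤ) ≤ x.2 := by omega
        exact_mod_cast this
      have h : ∀ j, η * (r j).1 + (r j).2 ≤ M j * (1 - η * fi - fl) := fun j =>
        (div_le_iff₀ hD2).mp (le_trans (le_max_left _ _) (le_max_right _ _))
      have hsum : η * ((x.1:ℝ) - fi) + ((x.2:ℝ) - fl)
          ≤ (∑ j, M j * s j) * (1 - η * fi - fl) := by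
        have e1 : η * ((x.1:ℝ) - fi) + ((x.2:ℝ) - fl)
            = ∑ j, (η * (r j).1 + (r j).2) * s j := by
          have : ∑ j, (η * (r j).1 + (r j).2) * s j
              = η * ∑ j, (r j).1 * s j + ∑ j, (r j).2 * s j := by
            rw [Finset.mul_sum, ← Finset.sum_add_distrib]
            apply Finset.sum_congr rfl
            intro j _; ring
          rw [this, hS1, hS2]
        have e2 : ∑ j, (η * (r j).1 + (r j).2) * s j ≤ ∑ j, M j * s j * (1 - η * fi - fl) := by
          apply Finset.sum_le_sum
          intro j _
          have := mul_le_mul_of_nonneg_right (h j) (hs j)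
          nlinarith [this]
        rw [e1, Finset.sum_mul]
        exact e2
      nlinarith [hsum, mul_nonneg h0 hx1R]
end

section
/- With Φ, Φ_2, Φ_3 as in the canonical triangle lifting (η, μ > 0, all denominators positive): min over integers (m_1, m_2) with m_1 ≤ r_i of Φ(m_1, m_2) equals min{ Φ_2(⌊r_i⌋, ⌊m̄_2⌋), Φ_3(⌊r_i⌋, ⌈m̄_2⌉) }, where m̄_2 = r_ℓ + (r_i − ⌊r_i⌋)(−μ + (μ+η) f_ℓ)/(1 − (μ+η) f_i). -/
/-- Proposition 1(i): closed form for the minimum of `Φ` over integers `m₁ ≤ r_i`. -/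
theorem stmt_12 (η μ fi fl ri rl : ℝ) (hη : 0 < η) (hημ : η ≤ μ)
    (hD0 : 0 < 1 + fi) (hD1 : 0 < 1 - η * fi - fl) (hD2 : 0 < -μ * fi + fl)
    (hD3 : 0 < 1 - (μ + η) * fi) :
    let Φ1 : ℤ → ℝ := fun m1 => ((m1 : ℝ) - ri) / (1 + fi)
    let Φ2 : ℤ → ℤ → ℝ := fun m1 m2 =>
      (η * (ri - (m1 : ℝ)) + rl - (m2 : ℝ)) / (1 - η * fi - fl)
    let Φ3 : ℤ → ℤ → ℝ := fun m1 m2 =>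
      (μ * (ri - (m1 : ℝ)) - rl + (m2 : ℝ)) / (-μ * fi + fl)
    let Φ : ℤ → ℤ → ℝ := fun m1 m2 => max (Φ1 m1) (max (Φ2 m1 m2) (Φ3 m1 m2))
    let m2bar : ℝ := rl + (ri - (⌊ri⌋ : ℝ)) * (-μ + (μ + η) * fl) / (1 - (μ + η) * fi)
    IsLeast {v : ℝ | ∃ m1 m2 : ℤ, (m1 : ℝ) ≤ ri ∧ v = Φ m1 m2}
      (min (Φ2 ⌊ri⌋ ⌊m2bar⌋) (Φ3 ⌊ri⌋ ⌈m2bar⌉)) := by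
  intro Φ1 Φ2 Φ3 Φ m2bar
  have hμη : (0:ℝ) < μ + η := by linarith
  have hfl : (⌊ri⌋ : ℝ) ≤ ri := Int.floor_le ri
  set t : ℝ := ri - (⌊ri⌋ : ℝ) with ht
  have ht0 : 0 ≤ t := by rw [ht]; linarith
  set d2 : ℝ := 1 - η * fi - fl with hd2
  set d3 : ℝ := -μ * fi + fl with hd3
  set D : ℝ := 1 - (μ + η) * fi with hD
  set N : ℝ := -μ + (μ + η) * fl with hN
  have hb : m2bar = rl + t * N / D := rfl
  -- crossing inequalities
  have key23 : ∀ x : ℝ, x ≤ m2bar → (μ * t - rl + x) / d3 ≤ (η * t + rl - x) / d2 := by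
    intro x hx
    rw [hb] at hx
    have hx' : (x - rl) * D ≤ t * N := (le_div_iff₀ hD3).mp (by linarith)
    rw [div_le_div_iff₀ hD2 hD1, hd2, hd3]
    rw [hD, hN] at hx'
    nlinarith [hx']
  have key32 : ∀ x : ℝ, m2bar ≤ x → (η * t + rl - x) / d2 ≤ (μ * t - rl + x) / d3 := by
    intro x hx
    rw [hb] at hx
    have hx' : t * N ≤ (x - rl) * D := (div_le_iff₀ hD3).mp (by linarith)
    rw [div_le_div_iff₀ hD1 hD2, hd2, hd3]
    rw [hD, hN] at hx'
    nlinarith [hx']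
  -- nonnegativity at the crossing point
  have hg2b : 0 ≤ η * t + rl - m2bar := by
    rw [hb]
    have h2 : 0 ≤ t * ((μ + η) * d2) := by positivity
    have h1 : t * N ≤ η * t * D := by
      rw [hN, hD]; rw [hd2] at h2; nlinarith [h2]
    have h3 : t * N / D ≤ η * t := (div_le_iff₀ hD3).mpr h1
    linarith
  have hg3b : 0 ≤ μ * t - rl + m2bar := by
    rw [hb]
    have h2 : 0 ≤ t * ((μ + η) * d3) := by positivity
    have h1 : -(μ * t) * D ≤ t * N := by
      rw [hN, hD]; rw [hd3] at h2; nlinarith [h2]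
    have h3 : -(μ * t) ≤ t * N / D := (le_div_iff₀ hD3).mpr h1
    linarith
  have hbf : (⌊m2bar⌋ : ℝ) ≤ m2bar := Int.floor_le _
  have hbc : m2bar ≤ (⌈m2bar⌉ : ℝ) := Int.le_ceil _
  -- value identifications
  have hV2 : Φ2 ⌊ri⌋ ⌊m2bar⌋ = (η * t + rl - (⌊m2bar⌋ : ℝ)) / d2 := rfl
  have hV3 : Φ3 ⌊ri⌋ ⌈m2bar⌉ = (μ * t - rl + (⌈m2bar⌉ : ℝ)) / d3 := rfl
  have h1 : Φ3 ⌊ri⌋ ⌊m2bar⌋ ≤ Φ2 ⌊ri⌋ ⌊m2bar⌋ := key23 _ hbf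
  have h2 : Φ2 ⌊ri⌋ ⌈m2bar⌉ ≤ Φ3 ⌊ri⌋ ⌈m2bar⌉ := key32 _ hbc
  have hV2pos : 0 ≤ Φ2 ⌊ri⌋ ⌊m2bar⌋ := by
    rw [hV2]; exact div_nonneg (by linarith) hD1.le
  have hV3pos : 0 ≤ Φ3 ⌊ri⌋ ⌈m2bar⌉ := by
    rw [hV3]; exact div_nonneg (by linarith) hD2.le
  have hΦ1 : Φ1 ⌊ri⌋ ≤ 0 := by
    show ((⌊ri⌋ : ℝ) - ri) / (1 + fi) ≤ 0
    apply div_nonpos_of_nonpos_of_nonneg _ hD0.le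
    linarith
  constructor
  · rcases le_total (Φ2 ⌊ri⌋ ⌊m2bar⌋) (Φ3 ⌊ri⌋ ⌈m2bar⌉) with h | h
    · refine ⟨⌊ri⌋, ⌊m2bar⌋, hfl, ?_⟩
      rw [min_eq_left h]
      show Φ2 ⌊ri⌋ ⌊m2bar⌋ = max (Φ1 ⌊ri⌋) (max (Φ2 ⌊ri⌋ ⌊m2bar⌋) (Φ3 ⌊ri⌋ ⌊m2bar⌋))
      rw [max_eq_left h1, max_eq_right (le_trans hΦ1 hV2pos)]
    · refine ⟨⌊ri⌋, ⌈m2bar⌉, hfl, ?_⟩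
      rw [min_eq_right h]
      show Φ3 ⌊ri⌋ ⌈m2bar⌉ = max (Φ1 ⌊ri⌋) (max (Φ2 ⌊ri⌋ ⌈m2bar⌉) (Φ3 ⌊ri⌋ ⌈m2bar⌉))
      rw [max_eq_right h2, max_eq_right (le_trans hΦ1 hV3pos)]
  · rintro v ⟨m1, m2, hm1, rfl⟩
    have hm1a : m1 ≤ ⌊ri⌋ := Int.le_floor.mpr hm1
    have hm1a' : (m1 : ℝ) ≤ (⌊ri⌋ : ℝ) := by exact_mod_cast hm1a
    have htm1 : t ≤ ri - (m1 : ℝ) := by rw [ht]; linarith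
    have hΦ2m : (η * t + rl - (m2 : ℝ)) / d2 ≤ Φ2 m1 m2 := by
      show _ ≤ (η * (ri - (m1 : ℝ)) + rl - (m2 : ℝ)) / (1 - η * fi - fl)
      rw [← hd2]
      refine div_le_div_of_nonneg_right ?_ hD1.le
      linarith [mul_le_mul_of_nonneg_left htm1 hη.le]
    have hΦ3m : (μ * t - rl + (m2 : ℝ)) / d3 ≤ Φ3 m1 m2 := by
      show _ ≤ (μ * (ri - (m1 : ℝ)) - rl + (m2 : ℝ)) / (-μ * fi + fl)
      rw [← hd3]
      refine div_le_div_of_nonneg_right ?_ hD2.le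
      linarith [mul_le_mul_of_nonneg_left htm1 (by linarith : (0:ℝ) ≤ μ)]
    show min (Φ2 ⌊ri⌋ ⌊m2bar⌋) (Φ3 ⌊ri⌋ ⌈m2bar⌉)
        ≤ max (Φ1 m1) (max (Φ2 m1 m2) (Φ3 m1 m2))
    rcases le_or_gt m2 ⌊m2bar⌋ with hc | hc
    · have hc' : (m2 : ℝ) ≤ (⌊m2bar⌋ : ℝ) := by exact_mod_cast hc
      have : Φ2 ⌊ri⌋ ⌊m2bar⌋ ≤ (η * t + rl - (m2 : ℝ)) / d2 := by
        rw [hV2]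
        refine div_le_div_of_nonneg_right ?_ hD1.le
        linarith
      have hfin : Φ2 ⌊ri⌋ ⌊m2bar⌋ ≤ Φ2 m1 m2 := this.trans hΦ2m
      calc min (Φ2 ⌊ri⌋ ⌊m2bar⌋) (Φ3 ⌊ri⌋ ⌈m2bar⌉) ≤ Φ2 ⌊ri⌋ ⌊m2bar⌋ := min_le_left _ _
        _ ≤ Φ2 m1 m2 := hfin
        _ ≤ _ := le_trans (le_max_left _ _) (le_max_right _ _)
    · have hcc : ⌈m2bar⌉ ≤ m2 := by
        have : ⌈m2bar⌉ ≤ ⌊m2bar⌋ + 1 := Int.ceil_le_floor_add_one _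
        omega
      have hc' : ((⌈m2bar⌉ : ℤ) : ℝ) ≤ (m2 : ℝ) := by exact_mod_cast hcc
      have : Φ3 ⌊ri⌋ ⌈m2bar⌉ ≤ (μ * t - rl + (m2 : ℝ)) / d3 := by
        rw [hV3]
        refine div_le_div_of_nonneg_right ?_ hD2.le
        linarith
      have hfin : Φ3 ⌊ri⌋ ⌈m2bar⌉ ≤ Φ3 m1 m2 := this.trans hΦ3m
      calc min (Φ2 ⌊ri⌋ ⌊m2bar⌋) (Φ3 ⌊ri⌋ ⌈m2bar⌉) ≤ Φ3 ⌊ri⌋ ⌈m2bar⌉ := min_le_right _ _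
        _ ≤ Φ3 m1 m2 := hfin
        _ ≤ _ := le_trans (le_max_right _ _) (le_max_right _ _)
end

section
/- Let 0 < f_ℓ < 1, and let p^2 = (−1, p^2_ℓ), p^3 = (−1, p^3_ℓ) with p^3_ℓ < p^2_ℓ be points such that the open segment from p^2 to p^3 contains at least two integer points (i.e., there exist at least two integers strictly between p^3_ℓ and p^2_ℓ). Let p^1 be the intersection of the line through p^2 and (0,1) with the line through p^3 and (0,0). Then the triangle with vertices p^1, p^2, p^3 contains (0,0) and (0,1) in the relative interior of its edges p^3 p^1 and p^2 p^1 respectively, and p^1 has positive first coordinate. -/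
/-!
Two distinct integers strictly between `p³ₗ` and `p²ₗ` force `p²ₗ - p³ₗ > 1`.
Subtracting the two line equations gives `(p²ₗ - p³ₗ - 1) · p¹₁ = 1`, so the apex lies
to the right of the line `x₁ = 0`. Each of `(0,0)`, `(0,1)` lies on the line from a point
with `x₁ = -1` to `p¹`, and `x₁ = 0` separates these endpoints, so both points are in the
open edges.
-/

lemma one_lt_sub_of_int_ne_mem_Ioo {u v : ℝ} {a b : ℤ} (hab : a ≠ b)
    (ha : (a : ℝ) ∈ Set.Ioo u v) (hb : (b : ℝ) ∈ Set.Ioo u v) : 1 < v - u := by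
  obtain ⟨hua, hav⟩ := ha
  obtain ⟨hub, hbv⟩ := hb
  rcases hab.lt_or_gt with h | h
  · have : (a : ℝ) + 1 ≤ b := by exact_mod_cast h
    linarith
  · have : (b : ℝ) + 1 ≤ a := by exact_mod_cast h
    linarith

-- `(0, d) = (p.1 • (-1, c) + p) / (1 + p.1)`
lemma zero_mk_mem_openSegment {c d : ℝ} {p : ℝ × ℝ} (hp : 0 < p.1)
    (hline : p.2 = d + (d - c) * p.1) :
    ((0 : ℝ), d) ∈ openSegment ℝ ((-1 : ℝ), c) p := by
  have hx : (0 : ℝ) < 1 + p.1 := by linarith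
  refine ⟨p.1 / (1 + p.1), 1 / (1 + p.1), by positivity, by positivity, by field_simp; ring, ?_⟩
  ext
  · simp only [Prod.fst_add, Prod.smul_fst, smul_eq_mul]
    field_simp
    ring
  · simp only [Prod.snd_add, Prod.smul_snd, smul_eq_mul, hline]
    field_simp
    ring

theorem stmt_16_general (p2l p3l : ℝ)
    (hints : ∃ a b : ℤ, a ≠ b ∧ p3l < (a : ℝ) ∧ (a : ℝ) < p2l ∧
      p3l < (b : ℝ) ∧ (b : ℝ) < p2l)
    (p1 : ℝ × ℝ)
    (hline2 : p1.2 = 1 + (1 - p2l) * p1.1)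
    (hline3 : p1.2 = -p3l * p1.1) :
    0 < p1.1 ∧
    ((0 : ℝ), (0 : ℝ)) ∈ openSegment ℝ ((-1 : ℝ), p3l) p1 ∧
    ((0 : ℝ), (1 : ℝ)) ∈ openSegment ℝ ((-1 : ℝ), p2l) p1 := by
  obtain ⟨a, b, hab, ha3, ha2, hb3, hb2⟩ := hints
  have hgap : 1 < p2l - p3l := one_lt_sub_of_int_ne_mem_Ioo hab ⟨ha3, ha2⟩ ⟨hb3, hb2⟩
  have hapex : (p2l - p3l - 1) * p1.1 = 1 := by linear_combination hline2 - hline3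
  have hpos : 0 < p1.1 := pos_of_mul_pos_right (hapex ▸ one_pos) (by linarith)
  exact ⟨hpos, zero_mk_mem_openSegment hpos (by rw [hline3]; ring),
    zero_mk_mem_openSegment hpos hline2⟩

/-- Construction of a Type 2 triangle from Section 2.2: the apex `p¹` has positive
first coordinate, and `(0,0)`, `(0,1)` lie in the relative interiors of the edges
`p³p¹` and `p²p¹` respectively. -/
theorem stmt_16 (fl p2l p3l : ℝ) (hfl0 : 0 < fl) (hfl1 : fl < 1)
    (hlt : p3l < p2l)
    (hints : ∃ a b : ℤ, a ≠ b ∧ p3l < (a : ℝ) ∧ (a : ℝ) < p2l ∧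
      p3l < (b : ℝ) ∧ (b : ℝ) < p2l)
    (p1 : ℝ × ℝ)
    (hline2 : p1.2 = 1 + (1 - p2l) * p1.1)
    (hline3 : p1.2 = -p3l * p1.1) :
    0 < p1.1 ∧
    ((0 : ℝ), (0 : ℝ)) ∈ openSegment ℝ ((-1 : ℝ), p3l) p1 ∧
    ((0 : ℝ), (1 : ℝ)) ∈ openSegment ℝ ((-1 : ℝ), p2l) p1 :=
  stmt_16_general p2l p3l hints p1 hline2 hline3
end
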